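/- A pair (d, D) of linear maps on V is a biderivation of the Leibniz algebra L₁ if and only if there exist complex numbers c, f, g such that d(e₁) = c·e₃ + f·e₄, d(e₂) = c·e₄, d(e₃) = d(e₄) = 0, D(e₁) = c·e₃ + g·e₄, and D(e₂) = D(e₃) = D(e₄) = 0. Consequently, the space of biderivations of L₁ is a 3-dimensional linear subspace of End(V) × End(V). -/

import Mathlib

/-- `V = ℂ⁴`. -/
abbrev V : Type := Fin 4 → ℂ

/-- standard basis: `e 0 = e₁`, ..., `e 3 = e₄`. -/
def e (i : Fin 4) : V := Pi.single i 1

/-- Bracket of the Leibniz algebra `L₁`: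
`⟦e₁,e₁⟧ = e₂`, `⟦e₂,e₁⟧ = e₃`, `⟦e₃,e₁⟧ = e₄`, all other basis products zero. -/
def br (x y : V) : V :=
  (x 0 * y 0) • e 1 + (x 1 * y 0) • e 2 + (x 2 * y 0) • e 3

/-- A derivation. -/
def IsDer (d : V →ₗ[ℂ] V) : Prop :=
  ∀ x y : V, d (br x y) = br (d x) y + br x (d y)

/-- An antiderivation. -/
def IsAntiDer (D : V →ₗ[ℂ] V) : Prop :=
  ∀ x y : V, D (br x y) = br x (D y) - br y (D x)

/-- A biderivation: a pair of a derivation and an antiderivation satisfying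
`⟦d(x),y⟧ = ⟦D(x),y⟧` for all `x, y`. -/
def IsBider (d D : V →ₗ[ℂ] V) : Prop :=
  IsDer d ∧ IsAntiDer D ∧ ∀ x y : V, br (d x) y = br (D x) y

/-!
Writing `N` for the nilpotent shift `e₁ ↦ e₂ ↦ e₃ ↦ e₄ ↦ 0`, the bracket is `⟦x, y⟧ = y₁ • N x`.
In this form the antiderivation identity forces `D x = x₁ • D e₁` with `(D e₁)₁ = 0`, and the
compatibility condition reads `N ∘ d = N ∘ D`. Hence `d` also has vanishing first coordinate, so
the derivation identity collapses to `d ∘ N = N ∘ d` and `d (e_{k+1}) = N^k (d e₁)`; finally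
`N (d e₂) = N (D e₂) = 0` kills the `e₂`-component of `d e₁`. What is left are three free
parameters, carried by three linearly independent biderivations.
-/

def matrixUnit (i j : Fin 4) : V →ₗ[ℂ] V := (LinearMap.proj j).smulRight (e i)

def shift : V →ₗ[ℂ] V := matrixUnit 1 0 + matrixUnit 2 1 + matrixUnit 3 2

@[simp] lemma e_apply (i j : Fin 4) : e i j = if j = i then 1 else 0 := by
  simp [e, Pi.single_apply]

@[simp] lemma matrixUnit_apply (i j : Fin 4) (x : V) : matrixUnit i j x = x j • e i := rfl

lemma shift_apply (x : V) : shift x = ![0, x 0, x 1, x 2] := by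
  ext k; fin_cases k <;> simp [shift]

@[simp] lemma shift_e_zero : shift (e 0) = e 1 := by simp [shift]
@[simp] lemma shift_e_one : shift (e 1) = e 2 := by simp [shift]
@[simp] lemma shift_e_two : shift (e 2) = e 3 := by simp [shift]
@[simp] lemma shift_e_three : shift (e 3) = 0 := by simp [shift]

lemma br_eq_smul_shift (x y : V) : br x y = y 0 • shift x := by
  simp only [br, shift, LinearMap.add_apply, matrixUnit_apply, smul_add, smul_smul, mul_comm]

lemma linearMap_ext_e {M : Type*} [AddCommMonoid M] [Module ℂ M] {f g : V →ₗ[ℂ] M}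
    (h0 : f (e 0) = g (e 0)) (h1 : f (e 1) = g (e 1)) (h2 : f (e 2) = g (e 2))
    (h3 : f (e 3) = g (e 3)) : f = g :=
  (Pi.basisFun ℂ (Fin 4)).ext fun i => by
    rw [Pi.basisFun_apply]; fin_cases i; exacts [h0, h1, h2, h3]

theorem isAntiDer_iff (D : V →ₗ[ℂ] V) :
    IsAntiDer D ↔ (∀ x, D x 0 = 0) ∧ D (e 1) = 0 ∧ D (e 2) = 0 ∧ D (e 3) = 0 := by
  simp only [IsAntiDer, br_eq_smul_shift, map_smul]
  constructor
  · intro h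
    have hD1 : D (e 1) = 0 := by simpa using h (e 0) (e 0)
    have hD00 : D (e 0) 0 = 0 := by simpa [hD1] using congrFun (h (e 0) (e 1)) 2
    have hD0 (y : V) : D y 0 = 0 := by simpa [hD1, hD00, eq_comm] using congrFun (h (e 0) y) 1
    exact ⟨hD0, hD1, by simpa [hD0] using h (e 1) (e 0), by simpa [hD0] using h (e 2) (e 0)⟩
  · rintro ⟨hD0, hD1, hD2, hD3⟩ x y
    simp [hD0, shift, hD1, hD2, hD3]

lemma forall_br_eq_br_iff (d D : V →ₗ[ℂ] V) :
    (∀ x y, br (d x) y = br (D x) y) ↔ shift ∘ₗ d = shift ∘ₗ D := by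
  simp only [br_eq_smul_shift, LinearMap.ext_iff, LinearMap.comp_apply]
  exact ⟨fun h x => by simpa using h x (e 0), fun h x y => by rw [h]⟩

lemma isDer_iff_of_apply_zero {d : V →ₗ[ℂ] V} (hd : ∀ x, d x 0 = 0) :
    IsDer d ↔ d ∘ₗ shift = shift ∘ₗ d := by
  simp only [IsDer, br_eq_smul_shift, map_smul, hd, zero_smul, add_zero, LinearMap.ext_iff,
    LinearMap.comp_apply]
  exact ⟨fun h x => by simpa using h x (e 0), fun h x y => by rw [h]⟩

lemma IsBider.exists_apply_e_eq {d D : V →ₗ[ℂ] V} (h : IsBider d D) : ∃ c f g : ℂ,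
    d (e 0) = c • e 2 + f • e 3 ∧ d (e 1) = c • e 3 ∧ d (e 2) = 0 ∧ d (e 3) = 0 ∧
    D (e 0) = c • e 2 + g • e 3 ∧ D (e 1) = 0 ∧ D (e 2) = 0 ∧ D (e 3) = 0 := by
  obtain ⟨hd, hD, hc⟩ := h
  obtain ⟨hD0, hD1, hD2, hD3⟩ := (isAntiDer_iff D).1 hD
  have hsd := LinearMap.congr_fun ((forall_br_eq_br_iff d D).1 hc)
  have hcoord (x : V) : d x 0 = D x 0 ∧ d x 1 = D x 1 ∧ d x 2 = D x 2 := by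
    simpa [shift_apply] using hsd x
  have hd0 (x : V) : d x 0 = 0 := (hcoord x).1.trans (hD0 x)
  have hds := LinearMap.congr_fun ((isDer_iff_of_apply_zero hd0).1 hd)
  have hde1 : d (e 1) = shift (d (e 0)) := by simpa using hds (e 0)
  have hde2 : d (e 2) = 0 := by simpa [hD1] using (hds (e 1)).trans (hsd (e 1))
  have hde3 : d (e 3) = 0 := by simpa [hde2] using hds (e 2)
  have hd01 : d (e 0) 1 = 0 := by simpa [hde1, hD1, shift_apply] using congrFun (hsd (e 1)) 3
  refine ⟨d (e 0) 2, d (e 0) 3, D (e 0) 3, ?_, ?_, hde2, hde3, ?_, hD1, hD2, hD3⟩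
  · ext k; fin_cases k <;> simp [hd0, hd01]
  · ext k; fin_cases k <;> simp [hde1, shift_apply, hd0, hd01]
  · ext k; fin_cases k <;> simp [hD0, ← (hcoord _).2.1, ← (hcoord _).2.2, hd01]

lemma apply_zero_eq_zero_of_e {f : V →ₗ[ℂ] V} (h0 : f (e 0) 0 = 0) (h1 : f (e 1) 0 = 0)
    (h2 : f (e 2) 0 = 0) (h3 : f (e 3) 0 = 0) (x : V) : f x 0 = 0 :=
  LinearMap.congr_fun (linearMap_ext_e (f := LinearMap.proj 0 ∘ₗ f) (g := 0) h0 h1 h2 h3) x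

lemma isBider_of_apply_e_eq {d D : V →ₗ[ℂ] V} {c f g : ℂ}
    (h0 : d (e 0) = c • e 2 + f • e 3) (h1 : d (e 1) = c • e 3) (h2 : d (e 2) = 0)
    (h3 : d (e 3) = 0) (H0 : D (e 0) = c • e 2 + g • e 3) (H1 : D (e 1) = 0) (H2 : D (e 2) = 0)
    (H3 : D (e 3) = 0) : IsBider d D := by
  have hd0 := apply_zero_eq_zero_of_e (f := d) (by simp [h0]) (by simp [h1]) (by simp [h2])
    (by simp [h3])
  have hD0 := apply_zero_eq_zero_of_e (f := D) (by simp [H0]) (by simp [H1]) (by simp [H2])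
    (by simp [H3])
  refine ⟨(isDer_iff_of_apply_zero hd0).2 ?_, (isAntiDer_iff D).2 ⟨hD0, H1, H2, H3⟩,
    (forall_br_eq_br_iff d D).2 ?_⟩
  · exact linearMap_ext_e (by simp [h0, h1]) (by simp [h1, h2]) (by simp [h2, h3]) (by simp [h3])
  · exact linearMap_ext_e (by simp [h0, H0]) (by simp [h1, H1]) (by simp [h2, H2])
      (by simp [h3, H3])

theorem isBider_iff (d D : V →ₗ[ℂ] V) : IsBider d D ↔ ∃ c f g : ℂ,
    d (e 0) = c • e 2 + f • e 3 ∧ d (e 1) = c • e 3 ∧ d (e 2) = 0 ∧ d (e 3) = 0 ∧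
    D (e 0) = c • e 2 + g • e 3 ∧ D (e 1) = 0 ∧ D (e 2) = 0 ∧ D (e 3) = 0 :=
  ⟨IsBider.exists_apply_e_eq, fun ⟨_, _, _, h0, h1, h2, h3, H0, H1, H2, H3⟩ =>
    isBider_of_apply_e_eq h0 h1 h2 h3 H0 H1 H2 H3⟩

def biderBasis : Fin 3 → (V →ₗ[ℂ] V) × (V →ₗ[ℂ] V) :=
  ![(matrixUnit 2 0 + matrixUnit 3 1, matrixUnit 2 0), (matrixUnit 3 0, 0), (0, matrixUnit 3 0)]

lemma linearIndependent_biderBasis : LinearIndependent ℂ biderBasis := by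
  refine Fintype.linearIndependent_iff.2 fun v hv => ?_
  have h1 := congrFun (LinearMap.congr_fun (congrArg Prod.fst hv) (e 0))
  have h2 := congrFun (LinearMap.congr_fun (congrArg Prod.snd hv) (e 0)) 3
  simp [Fin.sum_univ_three, biderBasis] at h1 h2
  intro i; fin_cases i
  · simpa using h1 2
  · simpa using h1 3
  · simpa using h2

lemma mem_span_biderBasis_iff (p : (V →ₗ[ℂ] V) × (V →ₗ[ℂ] V)) :
    p ∈ Submodule.span ℂ (Set.range biderBasis) ↔ IsBider p.1 p.2 := by
  rw [isBider_iff, Submodule.mem_span_range_iff_exists_fun]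
  constructor
  · rintro ⟨v, rfl⟩
    exact ⟨v 0, v 1, v 2, by simp [Fin.sum_univ_three, biderBasis]⟩
  · rintro ⟨c, f, g, h0, h1, h2, h3, H0, H1, H2, H3⟩
    refine ⟨![c, f, g], Prod.ext (linearMap_ext_e ?_ ?_ ?_ ?_) (linearMap_ext_e ?_ ?_ ?_ ?_)⟩ <;>
      simp [Fin.sum_univ_three, biderBasis, h0, h1, h2, h3, H0, H1, H2, H3]

theorem biderivations_of_L1 :
    (∀ d D : V →ₗ[ℂ] V, IsBider d D ↔ ∃ c f g : ℂ,
      d (e 0) = c • e 2 + f • e 3 ∧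
      d (e 1) = c • e 3 ∧
      d (e 2) = 0 ∧ d (e 3) = 0 ∧
      D (e 0) = c • e 2 + g • e 3 ∧
      D (e 1) = 0 ∧ D (e 2) = 0 ∧ D (e 3) = 0) ∧
    ∃ S : Submodule ℂ ((V →ₗ[ℂ] V) × (V →ₗ[ℂ] V)),
      (S : Set ((V →ₗ[ℂ] V) × (V →ₗ[ℂ] V))) = {p | IsBider p.1 p.2} ∧
      Module.finrank ℂ S = 3 :=
  ⟨isBider_iff, Submodule.span ℂ (Set.range biderBasis),
    Set.ext mem_span_biderBasis_iff, by simp [finrank_span_eq_card linearIndependent_biderBasis]⟩
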